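/- For r = 1 and k = 0, the constant C_{b_1,b_j}^{0,0} equals (2b_1 + 2b_j − 1)!!, i.e., the double factorial of 2b_1 + 2b_j − 1, for all nonnegative integers b_1, b_j with b_1 + b_j ≥ 1. -/

import Mathlib

open Polynomial MvPolynomial

/-- `xiOne n` is the auxiliary polynomial `ξ_{n+1}^{1,0}` for `r = 1`, `k = 0`:
`ξ_1(t) = t^2(t-1)` and `ξ_{m+1}(t) = t^2(t-1) (d/dt) ξ_m(t)`. -/
noncomputable def xiOne : ℕ → Polynomial ℤ
  | 0 => Polynomial.X ^ 2 * (Polynomial.X - 1)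
  | n + 1 => Polynomial.X ^ 2 * (Polynomial.X - 1) * Polynomial.derivative (xiOne n)

/-! The quotient of `(t_j - 1) p(t_i) - (t_i - 1) p(t_j)` by `t_i - t_j` is
`(t_j - 1) Δp - p(t_j)`, where `Δp = (p(t_i) - p(t_j)) / (t_i - t_j)` has coefficient
`p_{a+b+1}` at `t_i^a t_j^b`. Hence the coefficient of `t_i^a t_j^(b+1)`, `a > 0`, in the quotient
is `p_{a+b+1} - p_{a+b+2}`. For `p = t² ξ_{m+1}`, of degree `2m + 5 = a + b + 1`, this is the
leading coefficient of `ξ_{m+1}`; the recursion `ξ ↦ t²(t-1) ξ'` multiplies it by the degree,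
so it is `3 · 5 ⋯ (2m+1) = (2m+1)!!`. -/

lemma natDegree_X_sq_mul_X_sub_one_le {R : Type*} [Ring R] :
    (Polynomial.X ^ 2 * (Polynomial.X - 1) : R[X]).natDegree ≤ 3 := by
  compute_degree

lemma coeff_X_sq_mul_X_sub_one_three {R : Type*} [Ring R] :
    (Polynomial.X ^ 2 * (Polynomial.X - 1) : R[X]).coeff 3 = 1 := by
  simp [mul_sub, Polynomial.coeff_X_pow]

lemma xiOne_natDegree_le (n : ℕ) : (xiOne n).natDegree ≤ 2 * n + 3 := by
  induction n with
  | zero => exact natDegree_X_sq_mul_X_sub_one_le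
  | succ n ih =>
    have hd : (derivative (xiOne n)).natDegree ≤ 2 * n + 2 :=
      (natDegree_derivative_le _).trans (by omega)
    exact (natDegree_mul_le_of_le natDegree_X_sq_mul_X_sub_one_le hd).trans_eq (by ring)

lemma xiOne_coeff_natDegree (n : ℕ) :
    (xiOne n).coeff (2 * n + 3) = (2 * n + 1).doubleFactorial := by
  induction n with
  | zero => exact coeff_X_sq_mul_X_sub_one_three
  | succ n ih =>
    have hd : (derivative (xiOne n)).natDegree ≤ 2 * n + 2 :=
      (natDegree_derivative_le _).trans (by have := xiOne_natDegree_le n; omega)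
    rw [xiOne, show 2 * (n + 1) + 3 = 3 + (2 * n + 2) by ring,
      coeff_mul_add_eq_of_natDegree_le natDegree_X_sq_mul_X_sub_one_le hd,
      coeff_X_sq_mul_X_sub_one_three, coeff_derivative, ih,
      show 2 * (n + 1) + 1 = 2 * n + 1 + 2 by ring, Nat.doubleFactorial_add_two]
    push_cast
    ring

section DividedDifference

variable {R σ : Type*} [CommRing R] (i j : σ)

noncomputable def divDiff (p : R[X]) : MvPolynomial σ R :=
  ∑ k ∈ Finset.range (p.natDegree + 1), MvPolynomial.C (p.coeff k) *
    ∑ l ∈ Finset.range k, MvPolynomial.X i ^ l * MvPolynomial.X j ^ (k - 1 - l)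

theorem aeval_X_sub_aeval_X_eq_mul_divDiff (p : R[X]) :
    Polynomial.aeval (MvPolynomial.X i) p - Polynomial.aeval (MvPolynomial.X j) p =
      (MvPolynomial.X i - MvPolynomial.X j) * divDiff i j p := by
  rw [aeval_eq_sum_range, aeval_eq_sum_range, ← Finset.sum_sub_distrib, divDiff, Finset.mul_sum]
  refine Finset.sum_congr rfl fun k _ => ?_
  rw [← smul_sub, ← geom_sum₂_mul, MvPolynomial.smul_eq_C_mul]
  ring

variable {i j}

theorem single_add_single_eq_single_add_single_iff (hij : i ≠ j) {a b a' b' : ℕ} :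
    Finsupp.single i a' + Finsupp.single j b' = Finsupp.single i a + Finsupp.single j b ↔
      a' = a ∧ b' = b := by
  refine ⟨fun h => ?_, by rintro ⟨rfl, rfl⟩; rfl⟩
  have hi := DFunLike.congr_fun h i
  have hj := DFunLike.congr_fun h j
  simp only [Finsupp.add_apply, Finsupp.single_eq_same, Finsupp.single_eq_of_ne hij,
    Finsupp.single_eq_of_ne hij.symm, add_zero, zero_add] at hi hj
  exact ⟨hi, hj⟩

theorem coeff_X_pow_mul_X_pow (hij : i ≠ j) (a b a' b' : ℕ) :
    MvPolynomial.coeff (Finsupp.single i a + Finsupp.single j b)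
        (MvPolynomial.X i ^ a' * MvPolynomial.X j ^ b' : MvPolynomial σ R) =
      if a' = a ∧ b' = b then 1 else 0 := by
  classical
  rw [MvPolynomial.X_pow_eq_monomial, MvPolynomial.X_pow_eq_monomial, monomial_mul, one_mul,
    MvPolynomial.coeff_monomial]
  exact if_congr (single_add_single_eq_single_add_single_iff hij) rfl rfl

theorem coeff_divDiff (hij : i ≠ j) (p : R[X]) (a b : ℕ) :
    MvPolynomial.coeff (Finsupp.single i a + Finsupp.single j b) (divDiff i j p) =
      p.coeff (a + b + 1) := by
  have inner_sum (k : ℕ) :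
      (∑ l ∈ Finset.range k, if l = a ∧ k - 1 - l = b then (1 : R) else 0) =
        if k = a + b + 1 then 1 else 0 := by
    rw [Finset.sum_congr rfl fun l (hl : l ∈ Finset.range k) =>
      if_congr (show l = a ∧ k - 1 - l = b ↔ l = a ∧ k = a + b + 1 by
        rw [Finset.mem_range] at hl; omega) rfl rfl]
    simp only [ite_and, Finset.sum_ite_eq', Finset.mem_range]
    split_ifs <;> first | rfl | omega
  simp only [divDiff, MvPolynomial.coeff_sum, MvPolynomial.coeff_C_mul,
    coeff_X_pow_mul_X_pow hij, inner_sum, mul_ite, mul_one, mul_zero, Finset.sum_ite_eq',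
    Finset.mem_range]
  exact ite_eq_left_iff.mpr fun h => (coeff_eq_zero_of_natDegree_lt (by omega)).symm

theorem coeff_aeval_X_eq_zero (hij : i ≠ j) (p : R[X]) {a : ℕ} (ha : a ≠ 0) (b : ℕ) :
    MvPolynomial.coeff (Finsupp.single i a + Finsupp.single j b)
      (Polynomial.aeval (MvPolynomial.X j) p : MvPolynomial σ R) = 0 := by
  classical
  simp only [aeval_eq_sum_range, MvPolynomial.coeff_sum, MvPolynomial.coeff_smul,
    MvPolynomial.coeff_X_pow]
  refine Finset.sum_eq_zero fun k _ => ?_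
  rw [if_neg, smul_zero]
  intro h
  have hk : Finsupp.single j k = Finsupp.single i 0 + Finsupp.single j k := by simp
  rw [hk, single_add_single_eq_single_add_single_iff hij] at h
  exact ha h.1.symm

theorem coeff_X_mul_divDiff (hij : i ≠ j) (p : R[X]) (a b : ℕ) :
    MvPolynomial.coeff (Finsupp.single i a + Finsupp.single j (b + 1))
        (MvPolynomial.X j * divDiff i j p) = p.coeff (a + b + 1) := by
  rw [add_comm b 1, Finsupp.single_add, add_left_comm, MvPolynomial.coeff_X_mul, coeff_divDiff hij]

variable (i j) in
theorem sub_one_mul_aeval_sub_sub_one_mul_aeval (p : R[X]) :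
    (MvPolynomial.X j - 1) * Polynomial.aeval (MvPolynomial.X i) p -
        (MvPolynomial.X i - 1) * Polynomial.aeval (MvPolynomial.X j) p =
      (MvPolynomial.X i - MvPolynomial.X j) *
        ((MvPolynomial.X j - 1) * divDiff i j p - Polynomial.aeval (MvPolynomial.X j) p) := by
  linear_combination (MvPolynomial.X j - 1) * aeval_X_sub_aeval_X_eq_mul_divDiff i j p

theorem coeff_sub_one_mul_divDiff_sub_aeval (hij : i ≠ j) (p : R[X]) {a : ℕ} (ha : a ≠ 0)
    (b : ℕ) :
    MvPolynomial.coeff (Finsupp.single i a + Finsupp.single j (b + 1))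
        ((MvPolynomial.X j - 1) * divDiff i j p - Polynomial.aeval (MvPolynomial.X j) p) =
      p.coeff (a + b + 1) - p.coeff (a + b + 2) := by
  rw [sub_one_mul, MvPolynomial.coeff_sub, MvPolynomial.coeff_sub, coeff_X_mul_divDiff hij,
    coeff_divDiff hij, coeff_aeval_X_eq_zero hij p ha, sub_zero]
  rfl

end DividedDifference

/-- For `r = 1` (so `k₁ = k_j = 0`), the constant `C_{b₁,b_j}^{0,0}` — defined as the
coefficient of `t_i^{2b₁+2} t_j^{2b_j+1}` in
`(t_i^2(t_j-1) ξ_{m+1}(t_i) - t_j^2(t_i-1) ξ_{m+1}(t_j))/(t_i - t_j)` with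
`m = b₁ + b_j - 1` — equals `(2b₁ + 2b_j - 1)!!`. -/
theorem stmt3 (b₁ bj : ℕ) (h : 1 ≤ b₁ + bj) :
    ∃ Q : MvPolynomial (Fin 2) ℤ,
      (MvPolynomial.X 0) ^ 2 * (MvPolynomial.X 1 - 1) *
          (Polynomial.aeval (MvPolynomial.X (0 : Fin 2)) (xiOne (b₁ + bj - 1))) -
        (MvPolynomial.X 1) ^ 2 * (MvPolynomial.X 0 - 1) *
          (Polynomial.aeval (MvPolynomial.X (1 : Fin 2)) (xiOne (b₁ + bj - 1))) =
        (MvPolynomial.X 0 - MvPolynomial.X 1) * Q ∧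
      MvPolynomial.coeff
          (Finsupp.single (0 : Fin 2) (2 * b₁ + 2) + Finsupp.single (1 : Fin 2) (2 * bj + 1)) Q =
        (Nat.doubleFactorial (2 * b₁ + 2 * bj - 1) : ℤ) := by
  set m := b₁ + bj - 1
  set p : ℤ[X] := Polynomial.X ^ 2 * xiOne m
  refine ⟨(MvPolynomial.X 1 - 1) * divDiff 0 1 p - Polynomial.aeval (MvPolynomial.X 1) p, ?_, ?_⟩
  · rw [← sub_one_mul_aeval_sub_sub_one_mul_aeval]
    simp only [p, map_mul, map_pow, Polynomial.aeval_X]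
    ring
  · rw [coeff_sub_one_mul_divDiff_sub_aeval (by decide) p (by omega),
      show 2 * b₁ + 2 + 2 * bj + 1 = 2 * m + 3 + 2 by omega,
      show 2 * b₁ + 2 + 2 * bj + 2 = 2 * m + 4 + 2 by omega, coeff_X_pow_mul, coeff_X_pow_mul,
      xiOne_coeff_natDegree,
      coeff_eq_zero_of_natDegree_lt ((xiOne_natDegree_le m).trans_lt (by omega)), sub_zero,
      show 2 * b₁ + 2 * bj - 1 = 2 * m + 1 by omega]
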